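/- For every ν in (0,1], the quantity Z(ν) := (1/ν)·(1/Γ(2ν) − 1/(ν·Γ(ν)²)) is nonnegative, and Z(ν) = 0 if and only if ν = 1. -/
import Mathlib

open Real MeasureTheory Set intervalIntegral

private lemma beta_pt {ν : ℝ} {x : ℝ} (hx0 : 0 ≤ x) (hx1 : x ≤ 1) :
    (x : ℂ) ^ ((ν : ℂ) - 1) * ((1 : ℂ) - x) ^ ((ν : ℂ) - 1)
      = ((x ^ (ν - 1) * (1 - x) ^ (ν - 1) : ℝ) : ℂ) := by
  have h1 : ((ν : ℂ) - 1) = ((ν - 1 : ℝ) : ℂ) := by push_cast; ring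
  have h2 : ((1 : ℂ) - (x : ℂ)) = (((1 - x : ℝ)) : ℂ) := by push_cast; ring
  rw [h1, h2, ← Complex.ofReal_cpow hx0, ← Complex.ofReal_cpow (by linarith : (0:ℝ) ≤ 1 - x),
    ← Complex.ofReal_mul]

private lemma f_integrable {ν : ℝ} (hν0 : 0 < ν) :
    IntervalIntegrable (fun x : ℝ => x ^ (ν - 1) * (1 - x) ^ (ν - 1)) volume 0 1 := by
  have hre : 0 < Complex.re (ν : ℂ) := by simpa using hν0
  have hF := Complex.betaIntegral_convergent hre hre
  rw [intervalIntegrable_iff_integrableOn_Ioc_of_le (by norm_num : (0:ℝ) ≤ 1)] at hF ⊢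
  refine hF.re.congr ?_
  filter_upwards [ae_restrict_mem measurableSet_Ioc] with x hx
  rw [beta_pt hx.1.le hx.2]
  exact RCLike.ofReal_re _

private lemma gamma_key {ν : ℝ} (hν0 : 0 < ν) :
    Real.Gamma ν ^ 2 = Real.Gamma (2 * ν) *
      ∫ x in (0:ℝ)..1, x ^ (ν - 1) * (1 - x) ^ (ν - 1) := by
  have hre : 0 < Complex.re (ν : ℂ) := by simpa using hν0
  have hbeta := Complex.Gamma_mul_Gamma_eq_betaIntegral hre hre
  have hInt : Complex.betaIntegral ν ν
      = ((∫ x in (0:ℝ)..1, x ^ (ν - 1) * (1 - x) ^ (ν - 1) : ℝ) : ℂ) := by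
    rw [Complex.betaIntegral, ← intervalIntegral.integral_ofReal]
    apply intervalIntegral.integral_congr
    intro x hx
    rw [uIcc_of_le (by norm_num : (0:ℝ) ≤ 1)] at hx
    exact beta_pt hx.1 hx.2
  have h2 : ((ν : ℂ) + ν) = ((2 * ν : ℝ) : ℂ) := by push_cast; ring
  rw [hInt, Complex.Gamma_ofReal, h2, Complex.Gamma_ofReal] at hbeta
  rw [sq]
  exact_mod_cast hbeta

theorem stmt_0 (ν : ℝ) (hν0 : 0 < ν) (hν1 : ν ≤ 1) :
    0 ≤ (1 / ν) * (1 / Real.Gamma (2 * ν) - 1 / (ν * (Real.Gamma ν) ^ 2)) ∧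
      ((1 / ν) * (1 / Real.Gamma (2 * ν) - 1 / (ν * (Real.Gamma ν) ^ 2)) = 0 ↔ ν = 1) := by
  have hG : 0 < Real.Gamma ν := Real.Gamma_pos_of_pos hν0
  have hG2 : 0 < Real.Gamma (2 * ν) := Real.Gamma_pos_of_pos (by linarith)
  set I : ℝ := ∫ x in (0:ℝ)..1, x ^ (ν - 1) * (1 - x) ^ (ν - 1) with hIdef
  have hkey : Real.Gamma ν ^ 2 = Real.Gamma (2 * ν) * I := gamma_key hν0
  -- ∫ x^(ν-1) = 1/ν
  have hg_int : IntervalIntegrable (fun x : ℝ => x ^ (ν - 1)) volume 0 1 :=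
    intervalIntegrable_rpow' (by linarith)
  have hJ : (∫ x in (0:ℝ)..1, x ^ (ν - 1)) = 1 / ν := by
    rw [integral_rpow (Or.inl (by linarith))]
    rw [show ν - 1 + 1 = ν by ring, Real.one_rpow, Real.zero_rpow hν0.ne']
    ring
  have hf_int := f_integrable hν0
  -- the difference h = f - g is nonneg a.e. on [0,1]
  have hne1 : ∀ᵐ x ∂(volume.restrict (Icc (0:ℝ) 1)), x ≠ 1 := by
    refine (ae_iff.2 ?_)
    have : {x : ℝ | ¬x ≠ 1} = {1} := by ext x; simp
    rw [this]
    exact measure_mono_null (fun x hx => hx) (by simp [Measure.restrict_apply'])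
  have hdiff_nonneg : 0 ≤ I - 1 / ν := by
    rw [← hJ, ← intervalIntegral.integral_sub hf_int hg_int]
    apply intervalIntegral.integral_nonneg_of_ae_restrict (by norm_num)
    filter_upwards [ae_restrict_mem measurableSet_Icc, hne1] with x hx hx1
    simp only [Pi.zero_apply]
    obtain ⟨hxl, hxr⟩ := hx
    rcases eq_or_lt_of_le hxl with h0 | h0
    · simp only [← h0]
      rcases eq_or_ne ν 1 with rfl | hn
      · norm_num
      · rw [Real.zero_rpow (by intro h; apply hn; linarith)]
        norm_num
    · have hx1' : x < 1 := lt_of_le_of_ne hxr hx1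
      have h1x : 0 < 1 - x := by linarith
      have hxp : 0 < x ^ (ν - 1) := Real.rpow_pos_of_pos h0 _
      have h1 : 1 ≤ (1 - x) ^ (ν - 1) :=
        Real.one_le_rpow_of_pos_of_le_one_of_nonpos h1x (by linarith) (by linarith)
      have : x ^ (ν - 1) * 1 ≤ x ^ (ν - 1) * (1 - x) ^ (ν - 1) :=
        mul_le_mul_of_nonneg_left h1 hxp.le
      simp only [mul_one] at this
      linarith
  -- strict inequality when ν < 1
  have hdiff_pos : ν < 1 → 0 < I - 1 / ν := by
    intro hlt
    rw [← hJ, ← intervalIntegral.integral_sub hf_int hg_int]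
    have hsub : (∫ x in (1/2:ℝ)..(3/4), (x ^ (ν - 1) * (1 - x) ^ (ν - 1) - x ^ (ν - 1)))
        ≤ ∫ x in (0:ℝ)..1, (x ^ (ν - 1) * (1 - x) ^ (ν - 1) - x ^ (ν - 1)) := by
      apply intervalIntegral.integral_mono_interval (by norm_num) (by norm_num) (by norm_num)
      · filter_upwards [ae_restrict_mem measurableSet_Ioc,
          (ae_iff.2 (show (volume.restrict (Ioc (0:ℝ) 1)) {x | ¬x ≠ 1} = 0 by
            have : {x : ℝ | ¬x ≠ 1} = {1} := by ext x; simp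
            rw [this]
            exact measure_mono_null (fun x hx => hx) (by simp [Measure.restrict_apply'])))]
          with x hx hx1
        obtain ⟨hxl, hxr⟩ := hx
        have hx1' : x < 1 := lt_of_le_of_ne hxr hx1
        have h1x : 0 < 1 - x := by linarith
        have hxp : 0 < x ^ (ν - 1) := Real.rpow_pos_of_pos hxl _
        have h1 : 1 ≤ (1 - x) ^ (ν - 1) :=
          Real.one_le_rpow_of_pos_of_le_one_of_nonpos h1x (by linarith) (by linarith)
        have : x ^ (ν - 1) * 1 ≤ x ^ (ν - 1) * (1 - x) ^ (ν - 1) :=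
          mul_le_mul_of_nonneg_left h1 hxp.le
        simp only [mul_one] at this
        simp only [Pi.zero_apply]
        linarith
      · exact hf_int.sub hg_int
    refine lt_of_lt_of_le ?_ hsub
    apply intervalIntegral.intervalIntegral_pos_of_pos_on
    · apply ContinuousOn.intervalIntegrable
      apply ContinuousOn.sub
      · apply ContinuousOn.mul
        · exact fun x hx => (Real.continuousAt_rpow_const x _
            (Or.inl (by rw [uIcc_of_le (by norm_num : (1/2:ℝ) ≤ 3/4)] at hx; nlinarith [hx.1]))).continuousWithinAt
        · exact (ContinuousOn.rpow_const (by fun_prop) (fun x hx => Or.inl (by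
            rw [uIcc_of_le (by norm_num : (1/2:ℝ) ≤ 3/4)] at hx
            have := hx.2; intro h; nlinarith)))
      · exact fun x hx => (Real.continuousAt_rpow_const x _
          (Or.inl (by rw [uIcc_of_le (by norm_num : (1/2:ℝ) ≤ 3/4)] at hx; nlinarith [hx.1]))).continuousWithinAt
    · intro x hx
      have hx0 : (0:ℝ) < x := by linarith [hx.1]
      have h1x0 : 0 < 1 - x := by linarith [hx.2]
      have h1x1 : 1 - x < 1 := by linarith [hx.1]
      have hxp : 0 < x ^ (ν - 1) := Real.rpow_pos_of_pos hx0 _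
      have h1 : 1 < (1 - x) ^ (ν - 1) :=
        (Real.one_lt_rpow_iff_of_pos h1x0).2 (Or.inr ⟨h1x1, by linarith⟩)
      nlinarith
    · norm_num
  -- conclude
  have hGpos : 0 < ν * Real.Gamma ν ^ 2 := by positivity
  have hc : ν * (1 / ν) = 1 := mul_one_div_cancel hν0.ne'
  have hvI : 1 ≤ ν * I := by nlinarith [mul_nonneg hν0.le hdiff_nonneg]
  have hle : Real.Gamma (2 * ν) ≤ ν * Real.Gamma ν ^ 2 := by
    rw [hkey, show ν * (Real.Gamma (2 * ν) * I) = Real.Gamma (2 * ν) * (ν * I) by ring]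
    exact le_mul_of_one_le_right hG2.le hvI
  have hmain : 0 ≤ 1 / Real.Gamma (2 * ν) - 1 / (ν * Real.Gamma ν ^ 2) := by
    have := one_div_le_one_div_of_le hG2 hle
    linarith
  constructor
  · positivity
  · constructor
    · intro h
      by_contra hne
      have hlt : ν < 1 := lt_of_le_of_ne hν1 hne
      have hvI' : 1 < ν * I := by nlinarith [mul_pos hν0 (hdiff_pos hlt)]
      have hstrict : Real.Gamma (2 * ν) < ν * Real.Gamma ν ^ 2 := by
        rw [hkey, show ν * (Real.Gamma (2 * ν) * I) = Real.Gamma (2 * ν) * (ν * I) by ring]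
        exact lt_mul_of_one_lt_right hG2 hvI'
      have := one_div_lt_one_div_of_lt hG2 hstrict
      have hpos : 0 < (1 / ν) * (1 / Real.Gamma (2 * ν) - 1 / (ν * Real.Gamma ν ^ 2)) := by
        apply mul_pos (by positivity)
        linarith
      linarith
    · rintro rfl
      norm_num [Real.Gamma_two, Real.Gamma_one]
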